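/- Let d ≥ 1 and N ≥ 2 be integers, set h = 1/(2(N−1)) and grid coordinates x_{j,i} = (i−1)/(N−1), let b ∈ [d−1, d), and let f₂ : ℝ^d → ℝ be the function f₂(x) = ReLU(I₁(x))/(d − b) − ReLU(I₂(x))/(d − b), where I₁(x) = Σ_{i : x_{1,i} ≥ 1/2} φ_{x_{1,i}}(x₁) + Σ_{j=2}^{d} Σ_{i=1}^{N} φ_{x_{j,i}}(x_j) − b, I₂(x) = Σ_{i : x_{1,i} < 1/2} φ_{x_{1,i}}(x₁) + Σ_{j=2}^{d} Σ_{i=1}^{N} φ_{x_{j,i}}(x_j) − b, and φ_t is the ReLU hat function of half-width h centered at t. Then the d-dimensional Lebesgue measure of the set {x ∈ [0,1]^d : f₂(x) ≠ 0} is at most N^d·(d − b)^d/(N − 1)^d. -/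

import Mathlib

noncomputable def relu (x : ℝ) : ℝ := max x 0

/-- The one-dimensional ReLU hat function of half-width `h` centered at `t`. -/
noncomputable def hat (h t x : ℝ) : ℝ :=
  (1 / h) * relu (x - t + h) - (2 / h) * relu (x - t) + (1 / h) * relu (x - t - h)

lemma hat_eq {h : ℝ} (hh : 0 < h) (t y : ℝ) : hat h t y = max (1 - |y - t| / h) 0 := by
  unfold hat relu
  rcases le_total (y - t) 0 with h1 | h1
  · rw [abs_of_nonpos h1]
    rcases le_total (y - t + h) 0 with h2 | h2
    · rw [max_eq_right h2, max_eq_right h1, max_eq_right (by linarith : y - t - h ≤ 0),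
        max_eq_right (by rw [sub_nonpos, le_div_iff₀ hh]; linarith)]
      ring
    · rw [max_eq_left h2, max_eq_right h1, max_eq_right (by linarith : y - t - h ≤ 0),
        max_eq_left (by rw [sub_nonneg, div_le_one hh]; linarith)]
      field_simp
      ring
  · rw [abs_of_nonneg h1]
    rcases le_total (y - t - h) 0 with h2 | h2
    · rw [max_eq_left (by linarith : 0 ≤ y - t + h), max_eq_left h1, max_eq_right h2,
        max_eq_left (by rw [sub_nonneg, div_le_one hh]; linarith)]
      field_simp
      ring
    · rw [max_eq_left (by linarith : 0 ≤ y - t + h), max_eq_left h1, max_eq_left h2,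
        max_eq_right (by rw [sub_nonpos, le_div_iff₀ hh]; linarith)]
      field_simp
      ring

lemma hat_nonneg {h : ℝ} (hh : 0 < h) (t y : ℝ) : 0 ≤ hat h t y := by
  rw [hat_eq hh]; exact le_max_right _ _

lemma hat_le_one {h : ℝ} (hh : 0 < h) (t y : ℝ) : hat h t y ≤ 1 := by
  rw [hat_eq hh]
  apply max_le _ zero_le_one
  have : 0 ≤ |y - t| / h := div_nonneg (abs_nonneg _) hh.le
  linarith

lemma abs_lt_of_hat {h c : ℝ} (hh : 0 < h) (hc0 : 0 ≤ c) {t y : ℝ} (hc : c < hat h t y) :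
    |y - t| < (1 - c) * h := by
  rw [hat_eq hh] at hc
  rcases max_cases (1 - |y - t| / h) 0 with ⟨he, _⟩ | ⟨he, _⟩ <;> rw [he] at hc
  · have := (div_lt_iff₀ hh).mp (by linarith : |y - t| / h < 1 - c)
    linarith
  · linarith

lemma hat_eq_zero {h : ℝ} (hh : 0 < h) {t y : ℝ} (habs : h ≤ |y - t|) : hat h t y = 0 := by
  rw [hat_eq hh, max_eq_right]
  rw [sub_nonpos, le_div_iff₀ hh]
  linarith

section OneD
variable {N : ℕ} (hN : 2 ≤ N) {h : ℝ} (hh : h = 1 / (2 * ((N : ℝ) - 1)))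
  {xg : ℕ → ℝ} (hxg : ∀ i, xg i = ((i : ℝ) - 1) / ((N : ℝ) - 1))

include hN hh in
lemma h_pos : 0 < h := by
  have h2 : (2:ℝ) ≤ (N:ℝ) := by exact_mod_cast hN
  rw [hh]
  apply one_div_pos.mpr
  linarith

include hN hh hxg in
lemma sum_hat_cases (y : ℝ) :
    (∑ i ∈ Finset.Icc 1 N, hat h (xg i) y) = 0 ∨
    ∃ i ∈ Finset.Icc 1 N, (∑ i ∈ Finset.Icc 1 N, hat h (xg i) y) = hat h (xg i) y := by
  have h0 : 0 < h := h_pos hN hh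
  have h2 : (2:ℝ) ≤ (N:ℝ) := by exact_mod_cast hN
  have hNpos : (0:ℝ) < (N:ℝ) - 1 := by linarith
  set T := (Finset.Icc 1 N).filter (fun i => hat h (xg i) y ≠ 0) with hT
  have hsum : (∑ i ∈ Finset.Icc 1 N, hat h (xg i) y) = ∑ i ∈ T, hat h (xg i) y :=
    (Finset.sum_filter_ne_zero _).symm
  have hcard : T.card ≤ 1 := by
    apply Finset.card_le_one.mpr
    intro i hi i' hi'
    simp only [hT, Finset.mem_filter] at hi hi'
    by_contra hne
    have d1 : |y - xg i| < h := by
      by_contra hc; push_neg at hc; exact hi.2 (hat_eq_zero h0 hc)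
    have d2 : |y - xg i'| < h := by
      by_contra hc; push_neg at hc; exact hi'.2 (hat_eq_zero h0 hc)
    have key : (1:ℝ) ≤ |(i:ℝ) - (i':ℝ)| := by
      have h1 : ((i:ℤ) - (i':ℤ)) ≠ 0 := sub_ne_zero.mpr (by exact_mod_cast hne)
      have h3 : (1:ℤ) ≤ |(i:ℤ) - (i':ℤ)| := Int.one_le_abs h1
      have h4 : (1:ℝ) ≤ |((i:ℤ) - (i':ℤ) : ℤ)| := by exact_mod_cast h3
      push_cast at h4
      exact h4
    have dsep : 1 / ((N:ℝ) - 1) ≤ |xg i - xg i'| := by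
      rw [hxg, hxg, div_sub_div_same, abs_div, abs_of_pos hNpos,
        div_le_div_iff_of_pos_right hNpos]
      calc (1:ℝ) ≤ |(i:ℝ) - (i':ℝ)| := key
        _ = |(i:ℝ) - 1 - ((i':ℝ) - 1)| := by ring_nf
    have h2h : 2 * h = 1 / ((N:ℝ) - 1) := by rw [hh]; field_simp
    have habs : |xg i - xg i'| ≤ |y - xg i| + |y - xg i'| := by
      calc |xg i - xg i'| = |(y - xg i') - (y - xg i)| := by ring_nf
        _ ≤ |y - xg i'| + |y - xg i| := abs_sub _ _
        _ = |y - xg i| + |y - xg i'| := by ring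
    linarith
  rcases Finset.eq_empty_or_nonempty T with he | hne
  · left; rw [hsum, he, Finset.sum_empty]
  · right
    obtain ⟨i₀, hi₀⟩ := hne
    have : T = {i₀} := Finset.eq_singleton_iff_unique_mem.mpr
      ⟨hi₀, fun j hj => Finset.card_le_one.mp hcard j hj i₀ hi₀⟩
    refine ⟨i₀, (Finset.mem_filter.mp hi₀).1, ?_⟩
    rw [hsum, this, Finset.sum_singleton]

include hN hh hxg in
lemma sum_hat_le_one (y : ℝ) : (∑ i ∈ Finset.Icc 1 N, hat h (xg i) y) ≤ 1 := by
  rcases sum_hat_cases hN hh hxg y with hc | ⟨i, _, hc⟩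
  · rw [hc]; norm_num
  · rw [hc]; exact hat_le_one (h_pos hN hh) _ _

include hN hh hxg in
lemma exists_close {c : ℝ} (hc0 : 0 ≤ c) {y : ℝ}
    (hlt : c < ∑ i ∈ Finset.Icc 1 N, hat h (xg i) y) :
    ∃ i ∈ Finset.Icc 1 N, |y - xg i| < (1 - c) * h := by
  rcases sum_hat_cases hN hh hxg y with hc | ⟨i, hi, hc⟩
  · rw [hc] at hlt; linarith
  · rw [hc] at hlt
    exact ⟨i, hi, abs_lt_of_hat (h_pos hN hh) hc0 hlt⟩
end OneD

/-- the d-volume of the support of the d-dimensional classification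
network on `[0,1]^d` is at most `N^d (d-b)^d / (N-1)^d`. -/
theorem stmt_10 (d N : ℕ) (hd : 0 < d) (hN : 2 ≤ N)
    (h : ℝ) (hh : h = 1 / (2 * ((N : ℝ) - 1)))
    (xg : ℕ → ℝ) (hxg : ∀ i, xg i = ((i : ℝ) - 1) / ((N : ℝ) - 1))
    (b : ℝ) (hb : (d : ℝ) - 1 ≤ b ∧ b < (d : ℝ))
    (I₁ I₂ f₂ : (Fin d → ℝ) → ℝ)
    (hI₁ : ∀ x : Fin d → ℝ, I₁ x =
      (∑ i ∈ (Finset.Icc 1 N).filter (fun i => (1 : ℝ) / 2 ≤ xg i),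
        hat h (xg i) (x ⟨0, hd⟩))
      + (∑ j ∈ Finset.univ.filter (fun j : Fin d => j ≠ ⟨0, hd⟩),
          ∑ i ∈ Finset.Icc 1 N, hat h (xg i) (x j)) - b)
    (hI₂ : ∀ x : Fin d → ℝ, I₂ x =
      (∑ i ∈ (Finset.Icc 1 N).filter (fun i => xg i < (1 : ℝ) / 2),
        hat h (xg i) (x ⟨0, hd⟩))
      + (∑ j ∈ Finset.univ.filter (fun j : Fin d => j ≠ ⟨0, hd⟩),
          ∑ i ∈ Finset.Icc 1 N, hat h (xg i) (x j)) - b)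
    (hf : ∀ x, f₂ x = relu (I₁ x) / ((d : ℝ) - b) - relu (I₂ x) / ((d : ℝ) - b)) :
    MeasureTheory.volume
        {x : Fin d → ℝ | (∀ j, x j ∈ Set.Icc (0 : ℝ) 1) ∧ f₂ x ≠ 0}
      ≤ ENNReal.ofReal ((N : ℝ) ^ d * ((d : ℝ) - b) ^ d / ((N : ℝ) - 1) ^ d) := by
  have h0 : 0 < h := h_pos hN hh
  have h2 : (2:ℝ) ≤ (N:ℝ) := by exact_mod_cast hN
  have hd1 : (1:ℝ) ≤ (d:ℝ) := by exact_mod_cast hd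
  have hdb : 0 < (d:ℝ) - b := by linarith [hb.2]
  set r : ℝ := ((d:ℝ) - b) * h with hr
  have hr0 : 0 < r := mul_pos hdb h0
  set A : Set ℝ := ⋃ i ∈ Finset.Icc 1 N, Set.Icc (xg i - r) (xg i + r) with hA
  set G : Fin d → (Fin d → ℝ) → ℝ :=
    fun j x => ∑ i ∈ Finset.Icc 1 N, hat h (xg i) (x j) with hG
  -- pointwise containment
  have hsub : {x : Fin d → ℝ | (∀ j, x j ∈ Set.Icc (0 : ℝ) 1) ∧ f₂ x ≠ 0}
      ⊆ Set.pi Set.univ (fun _ : Fin d => A) := by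
    rintro x ⟨-, hx2⟩ j -
    -- step 1: total sum exceeds b
    have hne : relu (I₁ x) ≠ relu (I₂ x) := by
      intro he
      exact hx2 (by rw [hf, he, sub_self])
    have hIpos : 0 < I₁ x ∨ 0 < I₂ x := by
      by_contra hcon
      push_neg at hcon
      exact hne (by unfold relu; rw [max_eq_right hcon.1, max_eq_right hcon.2])
    have hsplit : (∑ k : Fin d, G k x)
        = G ⟨0, hd⟩ x + ∑ k ∈ Finset.univ.filter (fun k : Fin d => k ≠ ⟨0, hd⟩), G k x := by
      rw [Finset.filter_ne']
      exact (Finset.add_sum_erase _ (fun k => G k x) (Finset.mem_univ _)).symm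
    have htot : b < ∑ k : Fin d, G k x := by
      rcases hIpos with hI | hI
      · rw [hI₁] at hI
        have hP : (∑ i ∈ (Finset.Icc 1 N).filter (fun i => (1 : ℝ) / 2 ≤ xg i),
            hat h (xg i) (x ⟨0, hd⟩)) ≤ G ⟨0, hd⟩ x :=
          Finset.sum_le_sum_of_subset_of_nonneg (Finset.filter_subset _ _)
            (fun i _ _ => hat_nonneg h0 _ _)
        rw [hsplit]; linarith
      · rw [hI₂] at hI
        have hP : (∑ i ∈ (Finset.Icc 1 N).filter (fun i => xg i < (1 : ℝ) / 2),
            hat h (xg i) (x ⟨0, hd⟩)) ≤ G ⟨0, hd⟩ x :=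
          Finset.sum_le_sum_of_subset_of_nonneg (Finset.filter_subset _ _)
            (fun i _ _ => hat_nonneg h0 _ _)
        rw [hsplit]; linarith
    -- step 2: the j-th coordinate sum exceeds b - (d-1)
    have hrest : (∑ k ∈ Finset.univ.erase j, G k x) ≤ (d:ℝ) - 1 := by
      calc (∑ k ∈ Finset.univ.erase j, G k x)
          ≤ (Finset.univ.erase j).card • (1:ℝ) :=
            Finset.sum_le_card_nsmul _ _ _ (fun k _ => sum_hat_le_one hN hh hxg (x k))
        _ = ((d - 1 : ℕ) : ℝ) := by
            rw [Finset.card_erase_of_mem (Finset.mem_univ _), Finset.card_univ,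
              Fintype.card_fin, nsmul_eq_mul, mul_one]
        _ = (d:ℝ) - 1 := by
            rw [Nat.cast_sub hd, Nat.cast_one]
    have hsplitj : (∑ k : Fin d, G k x) = G j x + ∑ k ∈ Finset.univ.erase j, G k x :=
      (Finset.add_sum_erase _ (fun k => G k x) (Finset.mem_univ _)).symm
    have hGj : b - ((d:ℝ) - 1) < G j x := by
      rw [hsplitj] at htot; linarith
    -- step 3: x j is near a grid point
    obtain ⟨i, hi, habs⟩ := exists_close hN hh hxg (by linarith [hb.1]) hGj
    have h1c : (1 - (b - ((d:ℝ) - 1))) * h = r := by rw [hr]; ring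
    rw [h1c] at habs
    have := abs_lt.mp habs
    exact Set.mem_biUnion hi (Set.mem_Icc.mpr ⟨by linarith [this.1], by linarith [this.2]⟩)
  -- measure estimate
  have hvolA : MeasureTheory.volume A ≤ ENNReal.ofReal ((N:ℝ) * (2 * r)) := by
    calc MeasureTheory.volume A
        ≤ ∑ i ∈ Finset.Icc 1 N, MeasureTheory.volume (Set.Icc (xg i - r) (xg i + r)) :=
          MeasureTheory.measure_biUnion_finset_le _ _
      _ = ∑ i ∈ Finset.Icc 1 N, ENNReal.ofReal (2 * r) := by
          refine Finset.sum_congr rfl fun i _ => ?_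
          rw [Real.volume_Icc]
          ring_nf
      _ = (Finset.Icc 1 N).card • ENNReal.ofReal (2 * r) := Finset.sum_const _
      _ = ENNReal.ofReal ((N:ℝ) * (2 * r)) := by
          rw [Nat.card_Icc, nsmul_eq_mul, ← ENNReal.ofReal_natCast,
            ← ENNReal.ofReal_mul (by positivity)]
          norm_num
  calc MeasureTheory.volume {x : Fin d → ℝ | (∀ j, x j ∈ Set.Icc (0 : ℝ) 1) ∧ f₂ x ≠ 0}
      ≤ MeasureTheory.volume (Set.pi Set.univ (fun _ : Fin d => A)) :=
        MeasureTheory.measure_mono hsub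
    _ = ∏ _j : Fin d, MeasureTheory.volume A := MeasureTheory.volume_pi_pi _
    _ = (MeasureTheory.volume A) ^ d := by
        rw [Finset.prod_const, Finset.card_univ, Fintype.card_fin]
    _ ≤ (ENNReal.ofReal ((N:ℝ) * (2 * r))) ^ d := pow_le_pow_left' hvolA d
    _ = ENNReal.ofReal (((N:ℝ) * (2 * r)) ^ d) := by
        rw [ENNReal.ofReal_pow (by positivity)]
    _ = ENNReal.ofReal ((N : ℝ) ^ d * ((d : ℝ) - b) ^ d / ((N : ℝ) - 1) ^ d) := by
        congr 1
        have hN1 : ((N:ℝ) - 1) ≠ 0 := by linarith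
        have : (N:ℝ) * (2 * r) = (N:ℝ) * ((d:ℝ) - b) / ((N:ℝ) - 1) := by
          rw [hr, hh]; field_simp
        rw [this, div_pow, mul_pow]
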